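/- Let f be a non-zero vector of a metric vector space (V,Q) and let a* ∈ V* satisfy ⟨a*,f⟩ ≠ −1. Then (i) δ_{a*,f} ∈ O(V,Q) if and only if ⟨a*,x⟩ B(x,f) + ⟨a*,x⟩² Q(f) = 0 for all x ∈ V, and (ii) δ_{a*,f} ∈ O'(V,Q) if and only if, in addition, ⟨a*,x⟩ = 0 for all x ∈ V^⊥. -/

import Mathlib

/-! Setting: a field `F`, a finite-dimensional `F`-vector space `V`, a quadratic form
`Q : V → F` with polar form `B = QuadraticMap.polar Q` (the bilinear map `Q.polarBilin`),
induced map `D = Q.polarBilin : V →ₗ[F] Module.Dual F V`, and radical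
`V^⊥ = LinearMap.ker Q.polarBilin`. -/

variable {F V : Type*} [Field F] [AddCommGroup V] [Module F V] [FiniteDimensional F V]

/-- The map `δ_{c*,f} : x ↦ x + ⟨c*,x⟩ • f`. -/
def deltaMap (c : Module.Dual F V) (f : V) : V →ₗ[F] V :=
  LinearMap.id + c.smulRight f

/-- The orthogonal group `O(V,Q)`, as a set of linear endomorphisms. -/
def orthSet (Q : QuadraticForm F V) : Set (V →ₗ[F] V) :=
  {φ | Function.Bijective φ ∧ ∀ x, Q (φ x) = Q x}

/-- The weak orthogonal group `O'(V,Q)`: isometries fixing the radical elementwise. -/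
def wOrthSet (Q : QuadraticForm F V) : Set (V →ₗ[F] V) :=
  {φ | Function.Bijective φ ∧ (∀ x, Q (φ x) = Q x) ∧
    ∀ x ∈ LinearMap.ker Q.polarBilin, φ x = x}

/-- The group `Δ(V,f) = {δ_{a*,f} : a* ∈ V*, ⟨a*,f⟩ ≠ -1}`. -/
def deltaSet (f : V) : Set (V →ₗ[F] V) :=
  {φ | ∃ a : Module.Dual F V, a f ≠ -1 ∧ φ = deltaMap a f}

/-- The `Q`-reflection `ξ_r : x ↦ x - Q(r)⁻¹ • B(r,x) • r` in the direction of `r`. -/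
noncomputable def xiMap (Q : QuadraticForm F V) (r : V) : V →ₗ[F] V :=
  LinearMap.id - (Q r)⁻¹ • (Q.polarBilin r).smulRight r

/-! For fixed `f` the maps `δ_{c*,f}` compose as `δ_{c*,f} ∘ δ_{d*,f} = δ_{c* + d* + ⟨c*,f⟩ d*, f}`,
so `δ_{c*,f}` has the inverse `δ_{-(1 + ⟨c*,f⟩)⁻¹ c*, f}` when `⟨c*,f⟩ ≠ -1`. Being an isometry is
then read off from `Q(x + t f) = Q(x) + t B(x,f) + t² Q(f)`, and `δ_{a*,f}` fixes `x` iff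
`⟨a*,x⟩ f = 0`, i.e. iff `⟨a*,x⟩ = 0` as `f ≠ 0`. -/

theorem QuadraticMap.apply_add_smul {R M : Type*} [CommRing R] [AddCommGroup M] [Module R M]
    (Q : QuadraticMap R M R) (x f : M) (t : R) :
    Q (x + t • f) = Q x + (t * polar Q x f + t ^ 2 * Q f) := by
  rw [QuadraticMap.map_add Q, QuadraticMap.map_smul, polar_smul_right, smul_eq_mul, smul_eq_mul]
  ring

section Delta

variable {K W : Type*} [Field K] [AddCommGroup W] [Module K W]

theorem deltaMap_apply (c : Module.Dual K W) (f x : W) : deltaMap c f x = x + c x • f := rfl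

theorem deltaMap_zero (f : W) : deltaMap (0 : Module.Dual K W) f = LinearMap.id := by
  simp [deltaMap]

theorem deltaMap_comp_deltaMap (c d : Module.Dual K W) (f : W) :
    deltaMap c f ∘ₗ deltaMap d f = deltaMap (c + d + c f • d) f := by
  ext x
  simp only [LinearMap.comp_apply, deltaMap_apply, map_add, map_smul, LinearMap.add_apply,
    LinearMap.smul_apply, smul_eq_mul]
  module

theorem deltaMap_bijective {c : Module.Dual K W} {f : W} (hc : c f ≠ -1) :
    Function.Bijective (deltaMap c f) := by
  have hunit : 1 + c f ≠ 0 := fun h => hc (eq_neg_of_add_eq_zero_right h)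
  set d := -(1 + c f)⁻¹ • c
  have hcd : c + d + c f • d = 0 := by
    ext x
    simp only [d, LinearMap.add_apply, LinearMap.smul_apply, smul_eq_mul, LinearMap.zero_apply]
    field_simp
    ring
  have hdc : d + c + d f • c = 0 := by
    ext x
    simp only [d, LinearMap.add_apply, LinearMap.smul_apply, smul_eq_mul, LinearMap.zero_apply]
    field_simp
    ring
  refine Function.bijective_iff_has_inverse.mpr ⟨deltaMap d f, fun x => ?_, fun x => ?_⟩
  · rw [← LinearMap.comp_apply, deltaMap_comp_deltaMap, hdc, deltaMap_zero, LinearMap.id_apply]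
  · rw [← LinearMap.comp_apply, deltaMap_comp_deltaMap, hcd, deltaMap_zero, LinearMap.id_apply]

theorem deltaMap_apply_eq_self_iff {c : Module.Dual K W} {f : W} (hf : f ≠ 0) (x : W) :
    deltaMap c f x = x ↔ c x = 0 := by
  rw [deltaMap_apply, add_eq_left, smul_eq_zero, or_iff_left hf]

theorem deltaMap_isometry_iff (Q : QuadraticForm K W) (c : Module.Dual K W) (f : W) :
    (∀ x, Q (deltaMap c f x) = Q x) ↔ ∀ x, c x * Q.polarBilin x f + c x ^ 2 * Q f = 0 := by
  simp only [deltaMap_apply, QuadraticMap.apply_add_smul, add_eq_left,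
    QuadraticMap.polarBilin_apply_apply]

theorem deltaMap_mem_orthSet_iff (Q : QuadraticForm K W) {c : Module.Dual K W} {f : W}
    (hc : c f ≠ -1) :
    deltaMap c f ∈ orthSet Q ↔ ∀ x, c x * Q.polarBilin x f + c x ^ 2 * Q f = 0 := by
  simp only [orthSet, Set.mem_ofPred_eq, deltaMap_bijective hc, true_and, deltaMap_isometry_iff]

theorem deltaMap_mem_wOrthSet_iff (Q : QuadraticForm K W) {c : Module.Dual K W} {f : W}
    (hf : f ≠ 0) (hc : c f ≠ -1) :
    deltaMap c f ∈ wOrthSet Q ↔ (∀ x, c x * Q.polarBilin x f + c x ^ 2 * Q f = 0) ∧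
      ∀ x ∈ LinearMap.ker Q.polarBilin, c x = 0 := by
  simp only [wOrthSet, Set.mem_ofPred_eq, deltaMap_bijective hc, true_and, deltaMap_isometry_iff,
    deltaMap_apply_eq_self_iff hf]

end Delta

/-- Membership criteria for `δ_{a*,f}`: (i) `δ_{a*,f} ∈ O(V,Q)` iff
`⟨a*,x⟩ B(x,f) + ⟨a*,x⟩² Q(f) = 0` for all `x`; (ii) `δ_{a*,f} ∈ O'(V,Q)` iff, in
addition, `a*` vanishes on the radical. -/
theorem stmt5 (Q : QuadraticForm F V) (f : V) (hf : f ≠ 0)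
    (a : Module.Dual F V) (ha : a f ≠ -1) :
    (deltaMap a f ∈ orthSet Q ↔
      ∀ x : V, a x * Q.polarBilin x f + (a x) ^ 2 * Q f = 0) ∧
    (deltaMap a f ∈ wOrthSet Q ↔
      ((∀ x : V, a x * Q.polarBilin x f + (a x) ^ 2 * Q f = 0) ∧
        ∀ x ∈ LinearMap.ker Q.polarBilin, a x = 0)) := by
  exact ⟨deltaMap_mem_orthSet_iff Q ha, deltaMap_mem_wOrthSet_iff Q hf ha⟩
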